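/- Let t, u, v, w ∈ Σ⁺ with π̄(u) = ε, π(v) = ε, vw ≡ wv, and tu ≡ ut in the queue monoid. Then there exist natural numbers x_t, x_{u1}, x_{u2}, x_v, x_w with x_t ≠ 0 and x_w ≠ 0 such that u^{x_{u1}} v^{x_v} w t^{x_t} w^{x_w} u^{x_{u2}} ≡ u^{x_{u1}} w u^{x_{u2}} w^{x_w} t^{x_t} v^{x_v}. -/

import Mathlib

/-- One-step action of a queue symbol (`Sum.inl a` = write `a`, `Sum.inr a` = read `a`)
on a queue state (`none` = error state ⊥). -/
def qstep (A : Type) [DecidableEq A] : Option (List A) → A ⊕ A → Option (List A)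
  | none, _ => none
  | some q, Sum.inl a => some (q ++ [a])
  | some q, Sum.inr a =>
      match q with
      | [] => none
      | b :: q' => if b = a then some q' else none

/-- Action of a word of queue operations on a queue state. -/
def qact (A : Type) [DecidableEq A] (q : Option (List A)) (u : List (A ⊕ A)) :
    Option (List A) :=
  u.foldl (qstep A) q

/-- Equivalence of action sequences: same effect on every queue state. -/
def QEquiv (A : Type) [DecidableEq A] (u v : List (A ⊕ A)) : Prop :=
  ∀ q : Option (List A), qact A q u = qact A q v

/-- The sequence of write actions of a word. -/
def wr {A : Type} (u : List A) : List (A ⊕ A) := u.map Sum.inl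

/-- The sequence of read actions of a word. -/
def rd {A : Type} (u : List A) : List (A ⊕ A) := u.map Sum.inr

/-- Positive projection: erase all read actions. -/
def ppr {A : Type} (u : List (A ⊕ A)) : List A :=
  u.filterMap (Sum.elim some fun _ => none)

/-- Negative projection: erase all write actions (mapping ā to a). -/
def npr {A : Type} (u : List (A ⊕ A)) : List A :=
  u.filterMap (Sum.elim (fun _ => none) some)

/-- `wpow p n` is the `n`-th power `pⁿ` of the word `p`. -/
def wpow {A : Type} (p : List A) (n : ℕ) : List A := (List.replicate n p).flatten

/-!
On a queue at least as long as its read projection, a word succeeds iff that projection is a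
prefix of the queue, and then it replaces the prefix by its write projection at the end; so
two words with the same two projections act alike on long queues. Running both sides of
`tu ≡ ut` on `π̄(t)` and of `vw ≡ wv` on `π̄(v) π̄(w)` shows that `π(t)` commutes with `π(u)`
and `π̄(v)` with `π̄(w)`, and commuting words satisfy `x^{|y|} = y^{|x|}`. With these exponents
the two sides of the claimed relation, after the common prefix `u^{x_{u1}}`, have the same
projections, and the write-only prefix makes the queue long enough.
-/

section Powers

variable {B : Type} {x y : List B}

@[simp] lemma wpow_zero (p : List B) : wpow p 0 = [] := rfl

lemma wpow_succ (p : List B) (n : ℕ) : wpow p (n + 1) = p ++ wpow p n := by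
  simp [wpow, List.replicate_succ]

@[simp] lemma wpow_nil (n : ℕ) : wpow ([] : List B) n = [] := by
  simp [wpow]

lemma length_wpow (p : List B) (n : ℕ) : (wpow p n).length = n * p.length := by
  simp [wpow, List.sum_replicate]

lemma wpow_append_comm (h : x ++ y = y ++ x) (n : ℕ) : wpow x n ++ y = y ++ wpow x n := by
  induction n with
  | zero => simp
  | succ n ih => rw [wpow_succ, List.append_assoc, ih, ← List.append_assoc, h, List.append_assoc]

lemma wpow_append_wpow_comm (h : x ++ y = y ++ x) (n m : ℕ) :
    wpow x n ++ wpow y m = wpow y m ++ wpow x n := by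
  induction m with
  | zero => simp
  | succ m ih =>
    rw [wpow_succ, ← List.append_assoc, wpow_append_comm h, List.append_assoc, ih,
      ← List.append_assoc]

lemma wpow_length_eq_wpow_length (h : x ++ y = y ++ x) : wpow x y.length = wpow y x.length :=
  (List.append_inj (wpow_append_wpow_comm h _ _) (by simp [length_wpow, Nat.mul_comm])).1

end Powers

section Projections

variable {A : Type}

@[simp] lemma npr_nil : npr ([] : List (A ⊕ A)) = [] := rfl
@[simp] lemma ppr_nil : ppr ([] : List (A ⊕ A)) = [] := rfl
@[simp] lemma npr_cons_inl (a : A) (s : List (A ⊕ A)) : npr (Sum.inl a :: s) = npr s := rfl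
@[simp] lemma npr_cons_inr (a : A) (s : List (A ⊕ A)) : npr (Sum.inr a :: s) = a :: npr s := rfl
@[simp] lemma ppr_cons_inl (a : A) (s : List (A ⊕ A)) : ppr (Sum.inl a :: s) = a :: ppr s := rfl
@[simp] lemma ppr_cons_inr (a : A) (s : List (A ⊕ A)) : ppr (Sum.inr a :: s) = ppr s := rfl

@[simp] lemma npr_append (x y : List (A ⊕ A)) : npr (x ++ y) = npr x ++ npr y :=
  List.filterMap_append

@[simp] lemma ppr_append (x y : List (A ⊕ A)) : ppr (x ++ y) = ppr x ++ ppr y :=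
  List.filterMap_append

@[simp] lemma npr_wpow (s : List (A ⊕ A)) (n : ℕ) : npr (wpow s n) = wpow (npr s) n := by
  induction n with
  | zero => rfl
  | succ n ih => rw [wpow_succ, wpow_succ, npr_append, ih]

@[simp] lemma ppr_wpow (s : List (A ⊕ A)) (n : ℕ) : ppr (wpow s n) = wpow (ppr s) n := by
  induction n with
  | zero => rfl
  | succ n ih => rw [wpow_succ, wpow_succ, ppr_append, ih]

lemma eq_nil_of_npr_eq_nil_of_ppr_eq_nil {s : List (A ⊕ A)} (hn : npr s = []) (hp : ppr s = []) :
    s = [] := by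
  induction s with
  | nil => rfl
  | cons x s => cases x <;> simp at hn hp

end Projections

section Action

variable {A : Type} [DecidableEq A]

@[simp] lemma qact_nil (q : Option (List A)) : qact A q [] = q := rfl

@[simp] lemma qact_cons (q : Option (List A)) (x : A ⊕ A) (s : List (A ⊕ A)) :
    qact A q (x :: s) = qact A (qstep A q x) s := rfl

@[simp] lemma qact_none (s : List (A ⊕ A)) : qact A none s = none := by
  induction s with
  | nil => rfl
  | cons x s ih => simpa [qstep] using ih

lemma qact_append (q : Option (List A)) (x y : List (A ⊕ A)) :
    qact A q (x ++ y) = qact A (qact A q x) y :=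
  List.foldl_append

lemma qact_some_of_length_le (s : List (A ⊕ A)) (q : List A) (h : (npr s).length ≤ q.length) :
    qact A (some q) s =
      if npr s <+: q then some (q.drop (npr s).length ++ ppr s) else none := by
  induction s generalizing q with
  | nil => simp
  | cons x s ih =>
    cases x with
    | inl a =>
      simp only [npr_cons_inl] at h
      simp [qstep, ih (q ++ [a]) (by simp; omega), List.isPrefix_append_of_length h,
        List.drop_append_of_le_length h]
      congr
    | inr a =>
      cases q with
      | nil => simp at h
      | cons b q =>
        simp only [npr_cons_inr, List.length_cons, Nat.add_le_add_iff_right] at h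
        by_cases hba : b = a
        · subst hba
          simp [qstep, ih q h]
        · simp [qstep, hba, Ne.symm hba]

lemma qact_npr_append (s : List (A ⊕ A)) (z : List A) :
    qact A (some (npr s ++ z)) s = some (z ++ ppr s) := by
  rw [qact_some_of_length_le s _ (by simp)]
  simp

lemma QEquiv.npr_eq_and_ppr_eq {s s' : List (A ⊕ A)} (h : QEquiv A s s')
    (hl : (npr s).length = (npr s').length) : npr s = npr s' ∧ ppr s = ppr s' := by
  have hrun := h (some (npr s))
  rw [← List.append_nil (npr s), qact_npr_append, List.append_nil,
    qact_some_of_length_le s' _ (by simp [hl])] at hrun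
  split_ifs at hrun with hpre
  have heq := (hpre.eq_of_length hl.symm).symm
  simp_all

lemma qequiv_wpow_append_of_npr_eq_of_ppr_eq {u s s' : List (A ⊕ A)} (hu : u ≠ [])
    (hwr : npr u = []) (hn : npr s = npr s') (hp : ppr s = ppr s') :
    QEquiv A (wpow u (npr s).length ++ s) (wpow u (npr s).length ++ s') := by
  have hpu : ppr u ≠ [] := fun h => hu (eq_nil_of_npr_eq_nil_of_ppr_eq_nil hwr h)
  rintro (_ | q)
  · simp
  have hpad :
      qact A (some q) (wpow u (npr s).length) = some (q ++ wpow (ppr u) (npr s).length) := by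
    simpa [hwr] using qact_npr_append (wpow u (npr s).length) q
  have hlong : (npr s).length ≤ (q ++ wpow (ppr u) (npr s).length).length := by
    have := List.length_pos_iff.2 hpu
    simp only [List.length_append, length_wpow]
    nlinarith
  rw [qact_append, qact_append, hpad, qact_some_of_length_le s _ hlong,
    qact_some_of_length_le s' _ (hn ▸ hlong), hn, hp]

end Action

theorem stmt12_general (A : Type) [DecidableEq A] (t u v w : List (A ⊕ A))
    (hu : u ≠ []) (hv : v ≠ [])
    (hwr : npr u = []) (hrd : ppr v = [])
    (hvw : QEquiv A (v ++ w) (w ++ v)) (htu : QEquiv A (t ++ u) (u ++ t)) :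
    ∃ xt xu1 xu2 xv xw : ℕ, xt ≠ 0 ∧ xw ≠ 0 ∧
      QEquiv A (wpow u xu1 ++ wpow v xv ++ w ++ wpow t xt ++ wpow w xw ++ wpow u xu2)
        (wpow u xu1 ++ w ++ wpow u xu2 ++ wpow w xw ++ wpow t xt ++ wpow v xv) := by
  have htu_comm : ppr t ++ ppr u = ppr u ++ ppr t := by
    simpa using (htu.npr_eq_and_ppr_eq (by simp [hwr])).2
  have hvw_comm : npr v ++ npr w = npr w ++ npr v := by
    simpa [hrd] using (hvw.npr_eq_and_ppr_eq (by simp [Nat.add_comm])).1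
  set L := wpow v (npr w).length ++ w ++ wpow t (ppr u).length ++ wpow w (npr v).length ++
    wpow u (ppr t).length
  set R := w ++ wpow u (ppr t).length ++ wpow w (npr v).length ++ wpow t (ppr u).length ++
    wpow v (npr w).length
  have hn : npr L = npr R := by
    simp only [L, R, npr_append, npr_wpow, hwr, wpow_nil, List.append_nil, List.nil_append,
      List.append_assoc, wpow_length_eq_wpow_length hvw_comm]
    rw [← List.append_assoc, wpow_append_comm rfl, List.append_assoc]
  have hp : ppr L = ppr R := by
    simp [L, R, hrd, wpow_length_eq_wpow_length htu_comm]
  refine ⟨(ppr u).length, (npr L).length, (ppr t).length, (npr w).length, (npr v).length,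
    ?_, ?_, ?_⟩
  · exact fun h => hu (eq_nil_of_npr_eq_nil_of_ppr_eq_nil hwr (List.length_eq_zero_iff.1 h))
  · exact fun h => hv (eq_nil_of_npr_eq_nil_of_ppr_eq_nil (List.length_eq_zero_iff.1 h) hrd)
  · simpa only [L, R, List.append_assoc] using qequiv_wpow_append_of_npr_eq_of_ppr_eq hu hwr hn hp

/-- For a write-only word `u`, a read-only word `v`, and words `t, w` with
`tu ≡ ut` and `vw ≡ wv`, there is a relation
`u^{x_{u1}} v^{x_v} w t^{x_t} w^{x_w} u^{x_{u2}} ≡ u^{x_{u1}} w u^{x_{u2}} w^{x_w} t^{x_t} v^{x_v}`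
with `x_t, x_w ≠ 0`. -/
theorem stmt12 (A : Type) [DecidableEq A] (t u v w : List (A ⊕ A))
    (ht : t ≠ []) (hu : u ≠ []) (hv : v ≠ []) (hw : w ≠ [])
    (hwr : npr u = []) (hrd : ppr v = [])
    (hvw : QEquiv A (v ++ w) (w ++ v)) (htu : QEquiv A (t ++ u) (u ++ t)) :
    ∃ xt xu1 xu2 xv xw : ℕ, xt ≠ 0 ∧ xw ≠ 0 ∧
      QEquiv A (wpow u xu1 ++ wpow v xv ++ w ++ wpow t xt ++ wpow w xw ++ wpow u xu2)
        (wpow u xu1 ++ w ++ wpow u xu2 ++ wpow w xw ++ wpow t xt ++ wpow v xv) :=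
  stmt12_general A t u v w hu hv hwr hrd hvw htu
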